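/- arXiv:2512.05825 — 3 statements merged into one kernel-verified Lean document; each statement's English description precedes it below -/
import Mathlib

section
/- If a box ∏_m [l_m, u_m] with l < u componentwise is contained in a finite disjoint union of boxes covering a region, then the Lebesgue measure of the region dominated above by a point y within the union equals the sum over boxes of ∏_m max(0, u_{k,m} - max(l_{k,m}, y_m)). -/
open MeasureTheory

/-- for pairwise almost-disjoint boxes `B k = ∏ m [l k m, u k m]`, the measure
of `(⋃ k, B k) ∩ {z : y ≤ z}` equals `∑ k ∏ m max 0 (u k m - max (l k m) (y m))`. -/
theorem volume_union_boxes_inter_dominated (M K : ℕ) (l u : Fin K → Fin M → ℝ)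
    (y : Fin M → ℝ)
    (hdisj : ∀ i j : Fin K, i ≠ j →
      volume ((Set.univ.pi fun m => Set.Icc (l i m) (u i m)) ∩
              (Set.univ.pi fun m => Set.Icc (l j m) (u j m))) = 0) :
    volume ((⋃ k : Fin K, Set.univ.pi fun m => Set.Icc (l k m) (u k m)) ∩
            {z | ∀ m, y m ≤ z m})
      = ∑ k : Fin K, ∏ m, ENNReal.ofReal (max 0 (u k m - max (l k m) (y m))) := by
  have hS : {z : Fin M → ℝ | ∀ m, y m ≤ z m} = Set.univ.pi fun m => Set.Ici (y m) := by
    ext z; simp [Set.mem_pi, Pi.le_def]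
  have hC : ∀ k : Fin K,
      (Set.univ.pi fun m => Set.Icc (l k m) (u k m)) ∩ {z | ∀ m, y m ≤ z m}
        = Set.univ.pi fun m => Set.Icc (max (l k m) (y m)) (u k m) := by
    intro k
    rw [hS, ← Set.pi_inter_distrib]
    refine Set.pi_congr rfl fun m _ => ?_
    ext x
    simp only [Set.mem_inter_iff, Set.mem_Icc, Set.mem_Ici, max_le_iff]
    tauto
  rw [Set.iUnion_inter]
  rw [measure_iUnion₀]
  · rw [tsum_fintype]
    congr 1; ext k
    rw [hC k, volume_pi_pi]
    congr 1; ext m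
    rw [Real.volume_Icc]
    rcases le_total (u k m - max (l k m) (y m)) 0 with h | h
    · rw [max_eq_left h, ENNReal.ofReal_eq_zero.2 h, ENNReal.ofReal_zero]
    · rw [max_eq_right h]
  · intro i j hij
    refine measure_mono_null ?_ (hdisj i j hij)
    intro z hz
    exact ⟨hz.1.1, hz.2.1⟩
  · intro k
    exact ((MeasurableSet.univ_pi fun m => measurableSet_Icc).inter
      (by rw [hS]; exact MeasurableSet.univ_pi fun m => measurableSet_Ici)).nullMeasurableSet
end

section
/- Hypervolume improvement with respect to a larger Pareto set is smaller: if P ⊆ P', then H(P' ∪ {y}, r) − H(P', r) ≤ H(P ∪ {y}, r) − H(P, r). -/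
open MeasureTheory

/-- the hypervolume improvement with respect to a larger Pareto set is
smaller: if `P ⊆ P'` then `H(P' ∪ {y}, r) − H(P', r) ≤ H(P ∪ {y}, r) − H(P, r)`. -/
theorem hypervolume_improvement_antitone (M : ℕ) (r y : Fin M → ℝ)
    (P P' : Finset (Fin M → ℝ)) (hsub : P ⊆ P') :
    volume {z : Fin M → ℝ | (∀ m, z m ≤ r m) ∧ ∃ p ∈ insert y P', ∀ m, p m ≤ z m}
      - volume {z : Fin M → ℝ | (∀ m, z m ≤ r m) ∧ ∃ p ∈ P', ∀ m, p m ≤ z m}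
    ≤ volume {z : Fin M → ℝ | (∀ m, z m ≤ r m) ∧ ∃ p ∈ insert y P, ∀ m, p m ≤ z m}
      - volume {z : Fin M → ℝ | (∀ m, z m ≤ r m) ∧ ∃ p ∈ P, ∀ m, p m ≤ z m} := by
  classical
  set S : Finset (Fin M → ℝ) → Set (Fin M → ℝ) :=
    fun Q => {z | (∀ m, z m ≤ r m) ∧ ∃ p ∈ Q, ∀ m, p m ≤ z m} with hS
  have hSeq : ∀ Q : Finset (Fin M → ℝ), S Q = ⋃ p ∈ Q, Set.Icc p r := by
    intro Q
    ext z
    simp only [hS, Set.mem_setOf_eq, Set.mem_iUnion, Set.mem_Icc, Pi.le_def]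
    constructor
    · rintro ⟨h1, p, hp, h2⟩; exact ⟨p, hp, h2, h1⟩
    · rintro ⟨p, hp, h2, h1⟩; exact ⟨h1, p, hp, h2⟩
  have hmeas : ∀ Q : Finset (Fin M → ℝ), MeasurableSet (S Q) := by
    intro Q
    rw [hSeq]
    exact Q.measurableSet_biUnion (fun p _ => measurableSet_Icc)
  have hfin : ∀ Q : Finset (Fin M → ℝ), volume (S Q) < ⊤ := by
    intro Q
    rw [hSeq]
    refine lt_of_le_of_lt (measure_biUnion_finset_le Q _) ?_
    exact ENNReal.sum_lt_top.2 fun p _ => isCompact_Icc.measure_lt_top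
  have hins : ∀ Q : Finset (Fin M → ℝ), S (insert y Q) = Set.Icc y r ∪ S Q := by
    intro Q
    rw [hSeq, hSeq, Finset.set_biUnion_insert]
  have hmono : S P ⊆ S P' := by
    rw [hSeq, hSeq]
    exact Set.biUnion_subset_biUnion_left (fun p hp => hsub hp)
  show volume (S (insert y P')) - volume (S P') ≤ volume (S (insert y P)) - volume (S P)
  have key : volume (S (insert y P')) + volume (S P)
      ≤ volume (S (insert y P)) + volume (S P') := by
    have h1 : volume ((Set.Icc y r ∪ S P) ∪ S P') + volume ((Set.Icc y r ∪ S P) ∩ S P')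
        = volume (Set.Icc y r ∪ S P) + volume (S P') :=
      measure_union_add_inter _ (hmeas P')
    have h2 : S (insert y P') = (Set.Icc y r ∪ S P) ∪ S P' := by
      rw [hins]
      rw [Set.union_assoc, Set.union_eq_right.2 hmono]
    have h3 : S P ⊆ (Set.Icc y r ∪ S P) ∩ S P' :=
      Set.subset_inter (Set.subset_union_right) hmono
    calc volume (S (insert y P')) + volume (S P)
        ≤ volume ((Set.Icc y r ∪ S P) ∪ S P') + volume ((Set.Icc y r ∪ S P) ∩ S P') := by
          rw [← h2]; exact add_le_add le_rfl (measure_mono h3)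
      _ = volume (S (insert y P)) + volume (S P') := by rw [h1, hins]
  have hdc : volume (S P) ≤ volume (S (insert y P)) := by
    refine measure_mono ?_
    rw [hins]; exact Set.subset_union_right
  rw [tsub_le_iff_right, ENNReal.sub_add_eq_add_sub hdc (hfin P).ne]
  exact ENNReal.le_sub_of_add_le_right (hfin P).ne key
end

section
/- The hypervolume improvement of y^new equals the measure of the set of points in the non-dominated space N that are weakly dominated by y^new: H(P ∪ {y^new}, r) − H(P, r) = μ(N ∩ {z : y^new ≤ z ≤ r}). -/
open MeasureTheory

private lemma box_measurable (M : ℕ) (p r : Fin M → ℝ) :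
    MeasurableSet {z : Fin M → ℝ | (∀ m, z m ≤ r m) ∧ ∀ m, p m ≤ z m} := by
  have : {z : Fin M → ℝ | (∀ m, z m ≤ r m) ∧ ∀ m, p m ≤ z m}
      = Set.pi Set.univ (fun m => Set.Icc (p m) (r m)) := by
    ext z
    simp [Set.mem_pi, Set.mem_Icc, forall_and, and_comm, Pi.le_def]
  rw [this]
  exact MeasurableSet.univ_pi (fun m => measurableSet_Icc)

private lemma dom_eq (M : ℕ) (r : Fin M → ℝ) (P : Finset (Fin M → ℝ)) :
    {z : Fin M → ℝ | (∀ m, z m ≤ r m) ∧ ∃ p ∈ P, ∀ m, p m ≤ z m}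
      = ⋃ p ∈ P, {z : Fin M → ℝ | (∀ m, z m ≤ r m) ∧ ∀ m, p m ≤ z m} := by
  ext z
  simp only [Set.mem_setOf_eq, Set.mem_iUnion]
  tauto

private lemma dom_measurable (M : ℕ) (r : Fin M → ℝ) (P : Finset (Fin M → ℝ)) :
    MeasurableSet {z : Fin M → ℝ | (∀ m, z m ≤ r m) ∧ ∃ p ∈ P, ∀ m, p m ≤ z m} := by
  rw [dom_eq]
  exact P.measurableSet_biUnion (fun p _ => box_measurable M p r)

private lemma dom_finite (M : ℕ) (r : Fin M → ℝ) (P : Finset (Fin M → ℝ)) :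
    volume {z : Fin M → ℝ | (∀ m, z m ≤ r m) ∧ ∃ p ∈ P, ∀ m, p m ≤ z m} ≠ ⊤ := by
  rw [dom_eq]
  refine ne_top_of_le_ne_top ?_ (measure_biUnion_finset_le P _)
  refine (ENNReal.sum_lt_top.2 (fun p _ => ?_)).ne
  have : {z : Fin M → ℝ | (∀ m, z m ≤ r m) ∧ ∀ m, p m ≤ z m}
      = Set.pi Set.univ (fun m => Set.Icc (p m) (r m)) := by
    ext z
    simp [Set.mem_pi, Set.mem_Icc, forall_and, and_comm, Pi.le_def]
  rw [this, volume_pi_pi]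
  exact ENNReal.prod_lt_top (fun m _ => measure_Icc_lt_top)

/-- the hypervolume improvement of `yNew` equals the measure of the part of
the non-dominated space `N = Y \ D` weakly dominated by `yNew`. -/
theorem hypervolume_improvement_eq_newly_dominated (M : ℕ) (r yNew : Fin M → ℝ)
    (P : Finset (Fin M → ℝ)) :
    volume {z : Fin M → ℝ | (∀ m, z m ≤ r m) ∧ ∃ p ∈ insert yNew P, ∀ m, p m ≤ z m}
      - volume {z : Fin M → ℝ | (∀ m, z m ≤ r m) ∧ ∃ p ∈ P, ∀ m, p m ≤ z m}
    = volume (({z : Fin M → ℝ | ∀ m, z m ≤ r m} \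
          {z : Fin M → ℝ | (∀ m, z m ≤ r m) ∧ ∃ p ∈ P, ∀ m, p m ≤ z m}) ∩
        {z : Fin M → ℝ | ∀ m, yNew m ≤ z m}) := by
  set B := {z : Fin M → ℝ | (∀ m, z m ≤ r m) ∧ ∃ p ∈ P, ∀ m, p m ≤ z m} with hB
  set S := (({z : Fin M → ℝ | ∀ m, z m ≤ r m} \ B) ∩ {z : Fin M → ℝ | ∀ m, yNew m ≤ z m})
    with hS
  have hA : {z : Fin M → ℝ | (∀ m, z m ≤ r m) ∧ ∃ p ∈ insert yNew P, ∀ m, p m ≤ z m}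
      = B ∪ S := by
    ext z
    simp only [hB, hS, Set.mem_setOf_eq, Set.mem_union, Set.mem_inter_iff, Set.mem_diff,
      Finset.mem_insert]
    constructor
    · rintro ⟨hr, p, (rfl | hp), hle⟩
      · by_cases hzB : (∀ m, z m ≤ r m) ∧ ∃ q ∈ P, ∀ m, q m ≤ z m
        · exact Or.inl hzB
        · exact Or.inr ⟨⟨hr, hzB⟩, hle⟩
      · exact Or.inl ⟨hr, p, hp, hle⟩
    · rintro (⟨hr, p, hp, hle⟩ | ⟨⟨hr, _⟩, hle⟩)
      · exact ⟨hr, p, Or.inr hp, hle⟩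
      · exact ⟨hr, yNew, Or.inl rfl, hle⟩
  have hdisj : Disjoint B S := by
    rw [Set.disjoint_left]
    rintro z hzB ⟨⟨_, hznB⟩, _⟩
    exact hznB hzB
  have m1 : MeasurableSet {z : Fin M → ℝ | ∀ m, z m ≤ r m} := by
    have h : {z : Fin M → ℝ | ∀ m, z m ≤ r m} = Set.pi Set.univ (fun m => Set.Iic (r m)) := by
      ext z; simp [Set.mem_pi, Pi.le_def]
    rw [h]; exact MeasurableSet.univ_pi fun m => measurableSet_Iic
  have m2 : MeasurableSet {z : Fin M → ℝ | ∀ m, yNew m ≤ z m} := by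
    have h : {z : Fin M → ℝ | ∀ m, yNew m ≤ z m}
        = Set.pi Set.univ (fun m => Set.Ici (yNew m)) := by
      ext z; simp [Set.mem_pi, Pi.le_def]
    rw [h]; exact MeasurableSet.univ_pi fun m => measurableSet_Ici
  have hmeas : MeasurableSet S := ((m1.diff (dom_measurable M r P)).inter m2)
  rw [hA, measure_union hdisj hmeas,
    ENNReal.add_sub_cancel_left (dom_finite M r P)]
end
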